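/- Let P be a finite nonempty set of points in the upper half-plane and let D* be a smallest disk centered on the x-axis enclosing P, with radius r*. Then the boundary circle of D* contains at least one point of P; moreover, either some point of P equals the apex (c, r*) of D* (where (c,0) is the center), or the boundary contains two points of P, one with x-coordinate ≤ c and one with x-coordinate ≥ c. -/

import Mathlib

noncomputable def pt (x y : ℝ) : EuclideanSpace ℝ (Fin 2) := !₂[x, y]

open Filter Topology

/-!
If no point of `P` on the boundary circle has `x ≥ c`, then every farthest point lies strictly
to the left of the centre, and sliding the centre a little to the left brings every farthest
point strictly inside while the others stay inside by continuity; symmetrically on the right.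
Minimality forbids this, so the boundary meets both closed half-planes `x ≤ c` and `x ≥ c`,
unless a boundary point has `x = c`, which in the upper half-plane is the apex.
-/

theorem Finset.Nonempty.exists_mem_subset_closedBall_dist {α : Type*} [PseudoMetricSpace α]
    {P : Finset α} (hP : P.Nonempty) (x : α) :
    ∃ p ∈ P, (P : Set α) ⊆ Metric.closedBall x (dist p x) := by
  obtain ⟨p, hp, hmax⟩ := P.exists_max_image (dist · x) hP
  exact ⟨p, hp, fun q hq => Metric.mem_closedBall.2 (hmax q hq)⟩

lemma dist_pt (p : EuclideanSpace ℝ (Fin 2)) (a b : ℝ) :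
    dist p (pt a b) = √((p 0 - a) ^ 2 + (p 1 - b) ^ 2) := by
  rw [EuclideanSpace.dist_eq, Fin.sum_univ_two]
  simp [pt, Real.dist_eq, sq_abs]

lemma dist_pt_lt_dist_pt_iff (p : EuclideanSpace ℝ (Fin 2)) (a a' b : ℝ) :
    dist p (pt a b) < dist p (pt a' b) ↔ |p 0 - a| < |p 0 - a'| := by
  rw [dist_pt, dist_pt, Real.sqrt_lt_sqrt_iff (by positivity), add_lt_add_iff_right, sq_lt_sq]

lemma continuous_dist_pt (p : EuclideanSpace ℝ (Fin 2)) (b : ℝ) :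
    Continuous fun a => dist p (pt a b) := by
  simp only [dist_pt]
  fun_prop

lemma eq_pt_of_dist_pt_eq {p : EuclideanSpace ℝ (Fin 2)} {a r : ℝ} (hp : 0 ≤ p 1)
    (hd : dist p (pt a 0) = r) (hx : p 0 = a) : p = pt a r := by
  have hr : 0 ≤ r := hd ▸ dist_nonneg
  rw [dist_pt, hx, sub_self, sub_zero, Real.sqrt_eq_iff_mul_self_eq (by positivity) hr] at hd
  have hy : p 1 = r := by nlinarith
  ext i
  fin_cases i
  · simpa [pt] using hx
  · simpa [pt] using hy

lemma exists_center_forall_dist_lt_of_eventually {P : Finset (EuclideanSpace ℝ (Fin 2))}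
    {c r : ℝ} (l : Filter ℝ) [l.NeBot] (hl : l ≤ 𝓝 c)
    (hcov : ∀ p ∈ P, dist p (pt c 0) ≤ r)
    (hbd : ∀ p ∈ P, dist p (pt c 0) = r → ∀ᶠ t in l, |p 0 - t| < |p 0 - c|) :
    ∃ t, ∀ p ∈ P, dist p (pt t 0) < r := by
  suffices ∀ᶠ t in l, ∀ p ∈ P, dist p (pt t 0) < r from this.exists
  refine (eventually_all_finset P).2 fun p hp => ?_
  rcases (hcov p hp).eq_or_lt with hd | hd
  · filter_upwards [hbd p hp hd] with t ht
    exact hd ▸ (dist_pt_lt_dist_pt_iff p t c 0).2 ht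
  · exact hl (((continuous_dist_pt p 0).tendsto c).eventually (gt_mem_nhds hd))

lemma exists_center_forall_dist_lt {P : Finset (EuclideanSpace ℝ (Fin 2))} {c r : ℝ}
    (hcov : ∀ p ∈ P, dist p (pt c 0) ≤ r)
    (hside : (∀ p ∈ P, dist p (pt c 0) = r → c < p 0) ∨
      (∀ p ∈ P, dist p (pt c 0) = r → p 0 < c)) :
    ∃ t, ∀ p ∈ P, dist p (pt t 0) < r := by
  rcases hside with hright | hleft
  · refine exists_center_forall_dist_lt_of_eventually (𝓝[>] c) nhdsWithin_le_nhds hcov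
      fun p hp hd => ?_
    filter_upwards [Ioo_mem_nhdsGT (hright p hp hd)] with t ht
    rw [abs_of_pos (sub_pos.2 ht.2), abs_of_pos (sub_pos.2 (hright p hp hd))]
    linarith [ht.1]
  · refine exists_center_forall_dist_lt_of_eventually (𝓝[<] c) nhdsWithin_le_nhds hcov
      fun p hp hd => ?_
    filter_upwards [Ioo_mem_nhdsLT (hleft p hp hd)] with t ht
    rw [abs_of_neg (sub_neg.2 ht.1), abs_of_neg (sub_neg.2 (hleft p hp hd))]
    linarith [ht.2]

theorem smallest_enclosing_disk_boundary_general
    (P : Finset (EuclideanSpace ℝ (Fin 2))) (hPne : P.Nonempty)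
    (hup : ∀ q ∈ P, 0 ≤ q 1)
    (c r : ℝ)
    (hcov : (P : Set (EuclideanSpace ℝ (Fin 2))) ⊆ Metric.closedBall (pt c 0) r)
    (hmin : ∀ c' r' : ℝ, 0 ≤ r' →
      (P : Set (EuclideanSpace ℝ (Fin 2))) ⊆ Metric.closedBall (pt c' 0) r' → r ≤ r') :
    (∃ p ∈ P, dist p (pt c 0) = r) ∧
      ((∃ p ∈ P, p = pt c r) ∨
        ∃ p ∈ P, ∃ q ∈ P, dist p (pt c 0) = r ∧ dist q (pt c 0) = r ∧
          p 0 ≤ c ∧ c ≤ q 0) := by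
  have hcov' : ∀ p ∈ P, dist p (pt c 0) ≤ r := fun p hp => Metric.mem_closedBall.1 (hcov hp)
  have hfar : ∀ t, ∃ p ∈ P, r ≤ dist p (pt t 0) := fun t => by
    obtain ⟨p, hp, hsub⟩ := hPne.exists_mem_subset_closedBall_dist (pt t 0)
    exact ⟨p, hp, hmin t _ dist_nonneg hsub⟩
  obtain ⟨p₀, hp₀, hrp₀⟩ := hfar c
  have hp₀r : dist p₀ (pt c 0) = r := (hcov' p₀ hp₀).antisymm hrp₀
  refine ⟨⟨p₀, hp₀, hp₀r⟩, ?_⟩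
  by_contra! ⟨hnapex, hntwo⟩
  have hne : ∀ p ∈ P, dist p (pt c 0) = r → p 0 ≠ c := fun p hp hd hx =>
    hnapex p hp (eq_pt_of_dist_pt_eq (hup p hp) hd hx)
  suffices (∀ p ∈ P, dist p (pt c 0) = r → c < p 0) ∨
      (∀ p ∈ P, dist p (pt c 0) = r → p 0 < c) by
    obtain ⟨t, ht⟩ := exists_center_forall_dist_lt hcov' this
    obtain ⟨p, hp, hrp⟩ := hfar t
    exact (ht p hp).not_ge hrp
  rcases (hne p₀ hp₀ hp₀r).lt_or_gt with hlt | hgt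
  · exact Or.inr fun q hq hd => hntwo p₀ hp₀ q hq hp₀r hd hlt.le
  · refine Or.inl fun q hq hd => (hne q hq hd).symm.lt_of_le (not_lt.1 fun hqc => ?_)
    exact (hntwo q hq p₀ hp₀ hd hp₀r hqc.le).not_gt hgt

/-- A smallest axis-centered disk `D*` (center `(c,0)`, radius `r*`)
enclosing a finite nonempty set `P` of upper half-plane points has a point of `P` on
its boundary; moreover either some point of `P` is the apex `(c, r*)`, or the boundary
contains two points of `P`, one with x-coordinate `≤ c` and one with x-coordinate `≥ c`. -/
theorem smallest_enclosing_disk_boundary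
    (P : Finset (EuclideanSpace ℝ (Fin 2))) (hPne : P.Nonempty)
    (hup : ∀ q ∈ P, 0 ≤ q 1)
    (c r : ℝ) (hr : 0 ≤ r)
    (hcov : (P : Set (EuclideanSpace ℝ (Fin 2))) ⊆ Metric.closedBall (pt c 0) r)
    (hmin : ∀ c' r' : ℝ, 0 ≤ r' →
      (P : Set (EuclideanSpace ℝ (Fin 2))) ⊆ Metric.closedBall (pt c' 0) r' → r ≤ r') :
    (∃ p ∈ P, dist p (pt c 0) = r) ∧
      ((∃ p ∈ P, p = pt c r) ∨
        ∃ p ∈ P, ∃ q ∈ P, dist p (pt c 0) = r ∧ dist q (pt c 0) = r ∧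
          p 0 ≤ c ∧ c ≤ q 0) :=
  smallest_enclosing_disk_boundary_general P hPne hup c r hcov hmin
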